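/- For non-negative integers n and p, the q-super Catalan polynomials satisfy the recurrence A_{n,n+p}(q) = Σ_{k=0}^{⌊p/2⌋} A_{n,k}(q) Σ_{j=k}^{p-k} q^{k(n+k)+j(n+j)} [p choose 2k]_q [p-2k choose j-k]_q. -/

import Mathlib

open Polynomial

/-- The `q`-factorial `[n]! = ∏_{i=1}^n (1 + q + ⋯ + q^{i-1})` in `ℚ(q)`. -/
noncomputable def qFac (n : ℕ) : RatFunc ℚ :=
  ∏ i ∈ Finset.range n, ∑ j ∈ Finset.range (i + 1), RatFunc.X ^ j

/-- The Gaussian binomial coefficient `[n choose m]_q`, zero when out of range. -/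
noncomputable def qBinom (n m : ℕ) : RatFunc ℚ :=
  if m ≤ n then qFac n / (qFac (n - m) * qFac m) else 0

/-- The `q`-super Catalan number `A_{n,m}(q)`. -/
noncomputable def qA (n m : ℕ) : RatFunc ℚ :=
  qFac (2 * n) * qFac (2 * m) / (qFac n * qFac (n + m) * qFac m)

/-!
Since `A_{n,m} = [2n choose n] [2m choose m] / [n+m choose m]`, both sides reduce to the summation
`∑_k q^{k(n+k)} [j choose k] [m choose k] / [n+k choose k] = [n+j+m choose j] / [n+j choose j]`,
which is `q`-Vandermonde once the factorials are cleared. Regrouping the multinomial coefficient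
`[p choose 2k] [2k choose k] [p-2k choose j-k] = [p choose j] [j choose k] [p-j choose k]` turns
the right-hand side into a double sum; summing first over `k` (with `m = p - j`) and then over
`j` (with `j ↦ n + p`, `m = p`) gives
`[2n choose n] [2n+2p choose n+p] / [2n+p choose n+p] = A_{n,n+p}`.
-/

open Finset

local notation "q" => (RatFunc.X : RatFunc ℚ)

noncomputable def qInt (n : ℕ) : RatFunc ℚ := ∑ j ∈ range n, q ^ j

lemma qInt_add (a b : ℕ) : qInt (a + b) = qInt a + q ^ a * qInt b := by
  simp only [qInt, sum_range_add, mul_sum, pow_add]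

lemma qInt_ne_zero {n : ℕ} (hn : 0 < n) : qInt n ≠ 0 := by
  have hpoly : qInt n = algebraMap ℚ[X] (RatFunc ℚ) (∑ j ∈ range n, X ^ j) := by
    simp [qInt, RatFunc.algebraMap_X]
  rw [hpoly]
  refine RatFunc.algebraMap_ne_zero fun h => ?_
  have := congrArg (eval 1) h
  simp only [eval_finsetSum, eval_pow, eval_X, one_pow, sum_const, card_range, nsmul_eq_mul,
    mul_one, eval_zero, Nat.cast_eq_zero] at this
  omega

lemma qFac_zero : qFac 0 = 1 := prod_range_zero _

lemma qFac_succ (n : ℕ) : qFac (n + 1) = qFac n * qInt (n + 1) := prod_range_succ _ n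

lemma qFac_ne_zero (n : ℕ) : qFac n ≠ 0 :=
  prod_ne_zero_iff.mpr fun i _ => qInt_ne_zero i.succ_pos

lemma qBinom_of_le {n m : ℕ} (h : m ≤ n) : qBinom n m = qFac n / (qFac (n - m) * qFac m) :=
  if_pos h

lemma qBinom_of_lt {n m : ℕ} (h : n < m) : qBinom n m = 0 :=
  if_neg (Nat.not_le.mpr h)

lemma qBinom_zero_right (n : ℕ) : qBinom n 0 = 1 := by
  rw [qBinom_of_le n.zero_le, Nat.sub_zero, qFac_zero, mul_one, div_self (qFac_ne_zero n)]

lemma qBinom_self (n : ℕ) : qBinom n n = 1 := by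
  rw [qBinom_of_le le_rfl, Nat.sub_self, qFac_zero, one_mul, div_self (qFac_ne_zero n)]

lemma qBinom_succ_succ (n r : ℕ) :
    qBinom (n + 1) (r + 1) = qBinom n (r + 1) + q ^ (n - r) * qBinom n r := by
  rcases lt_trichotomy n r with h | rfl | h
  · rw [qBinom_of_lt (by omega), qBinom_of_lt (by omega), qBinom_of_lt h, mul_zero, add_zero]
  · rw [qBinom_self, qBinom_self, qBinom_of_lt (Nat.lt_succ_self n), Nat.sub_self, pow_zero,
      zero_add, one_mul]
  · obtain ⟨d, rfl⟩ := Nat.exists_eq_add_of_lt h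
    rw [qBinom_of_le (by omega), qBinom_of_le (by omega), qBinom_of_le (by omega),
      show r + d + 1 + 1 - (r + 1) = d + 1 by omega, show r + d + 1 - (r + 1) = d by omega,
      show r + d + 1 - r = d + 1 by omega, qFac_succ (r + d + 1), qFac_succ d, qFac_succ r,
      show r + d + 1 + 1 = (d + 1) + (r + 1) by omega, qInt_add]
    have := qInt_ne_zero d.succ_pos
    have := qInt_ne_zero r.succ_pos
    field_simp [qFac_ne_zero]

lemma pow_mul_qBinom_mul_qBinom_congr {a b i l e e' : ℕ} (h : i ≤ a → l ≤ b → e = e') :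
    q ^ e * qBinom a i * qBinom b l = q ^ e' * qBinom a i * qBinom b l := by
  by_cases hi : i ≤ a
  · by_cases hl : l ≤ b
    · rw [h hi hl]
    · simp [qBinom_of_lt (Nat.lt_of_not_le hl)]
  · simp [qBinom_of_lt (Nat.lt_of_not_le hi)]

theorem qBinom_add_eq (a b r : ℕ) :
    qBinom (a + b) r =
      ∑ i ∈ range (r + 1), q ^ ((r - i) * (a - i)) * qBinom a i * qBinom b (r - i) := by
  induction b generalizing r with
  | zero =>
    rw [sum_eq_single_of_mem r (self_mem_range_succ r), Nat.sub_self, zero_mul, pow_zero, one_mul,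
      qBinom_zero_right, mul_one, add_zero]
    intro i hi hir
    rw [qBinom_of_lt (n := 0) (by simp only [mem_range] at hi; omega), mul_zero]
  | succ b ih =>
    cases r with
    | zero => simp [qBinom_zero_right]
    | succ r =>
      have pascal_term : ∀ i ∈ range (r + 1),
          q ^ ((r + 1 - i) * (a - i)) * qBinom a i * qBinom (b + 1) (r + 1 - i) =
            q ^ ((r + 1 - i) * (a - i)) * qBinom a i * qBinom b (r + 1 - i) +
              q ^ (a + b - r) * (q ^ ((r - i) * (a - i)) * qBinom a i * qBinom b (r - i)) := by
        intro i hi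
        have hir : i ≤ r := Nat.lt_succ_iff.mp (mem_range.mp hi)
        rw [show r + 1 - i = r - i + 1 by omega, qBinom_succ_succ, mul_add, add_right_inj,
          ← mul_assoc, ← mul_assoc, ← mul_assoc, mul_right_comm _ _ (q ^ (b - (r - i))),
          ← pow_add, ← pow_add]
        refine pow_mul_qBinom_mul_qBinom_congr fun hia hb => ?_
        have hr : r ≤ a + b := by omega
        zify [hia, hb, hir, hr]
        ring
      rw [← add_assoc, qBinom_succ_succ, ih, ih, sum_range_succ _ (r + 1),
        sum_range_succ _ (r + 1), sum_congr rfl pascal_term, sum_add_distrib, ← mul_sum]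
      simp only [Nat.sub_self, qBinom_zero_right]
      ring

theorem qBinom_add_eq_of_le (a : ℕ) {b r : ℕ} (h : r ≤ b) :
    qBinom (a + b) r =
      ∑ i ∈ range (r + 1), q ^ (i * (b - r + i)) * qBinom a i * qBinom b (r - i) := by
  rw [add_comm, qBinom_add_eq b a r, ← sum_range_reflect]
  refine sum_congr rfl fun i hi => ?_
  have hir : i ≤ r := Nat.lt_succ_iff.mp (mem_range.mp hi)
  rw [Nat.add_sub_cancel, Nat.sub_sub_self hir, show b - (r - i) = b - r + i by omega]
  ring

theorem sum_qBinom_mul_qBinom_div_qBinom (n j m : ℕ) :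
    ∑ k ∈ range (m + 1), q ^ (k * (n + k)) * qBinom j k * qBinom m k / qBinom (n + k) k =
      qBinom (n + j + m) j / qBinom (n + j) j := by
  set c := qFac n * qFac m / qFac (n + m) with hc
  have hterm : ∀ k ∈ range (m + 1),
      qBinom m k / qBinom (n + k) k = c * qBinom (n + m) (m - k) := by
    intro k hk
    have hkm : k ≤ m := Nat.lt_succ_iff.mp (mem_range.mp hk)
    rw [qBinom_of_le hkm, qBinom_of_le (Nat.le_add_left k n), qBinom_of_le (by omega),
      Nat.add_sub_cancel, show n + m - (m - k) = n + k by omega, hc]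
    field_simp [qFac_ne_zero]
  have hrhs : qBinom (n + j + m) j / qBinom (n + j) j = c * qBinom (j + (n + m)) m := by
    rw [qBinom_of_le (by omega), qBinom_of_le (Nat.le_add_left j n), qBinom_of_le (by omega),
      Nat.add_sub_cancel, show n + j + m - j = n + m by omega,
      show j + (n + m) - m = n + j by omega, show j + (n + m) = n + j + m by omega, hc]
    field_simp [qFac_ne_zero]
  calc _ = c * ∑ k ∈ range (m + 1),
          q ^ (k * (n + k)) * qBinom j k * qBinom (n + m) (m - k) := by
        rw [mul_sum]
        refine sum_congr rfl fun k hk => ?_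
        rw [mul_div_assoc, hterm k hk]
        ring
    _ = qBinom (n + j + m) j / qBinom (n + j) j := by
        rw [hrhs, qBinom_add_eq_of_le j (Nat.le_add_left m n), Nat.add_sub_cancel]

lemma qA_eq_qBinom (n m : ℕ) :
    qA n m = qBinom (2 * n) n * qBinom (2 * m) m / qBinom (n + m) m := by
  rw [qA, qBinom_of_le (by omega), qBinom_of_le (by omega), qBinom_of_le (Nat.le_add_left m n),
    two_mul, two_mul, Nat.add_sub_cancel, Nat.add_sub_cancel, Nat.add_sub_cancel]
  field_simp [qFac_ne_zero]

lemma qBinom_multinomial_regroup {p j k : ℕ} (hkj : k ≤ j) (hjk : j + k ≤ p) :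
    qBinom (2 * k) k * qBinom p (2 * k) * qBinom (p - 2 * k) (j - k) =
      qBinom p j * qBinom j k * qBinom (p - j) k := by
  rw [qBinom_of_le (by omega), qBinom_of_le (by omega), qBinom_of_le (by omega),
    qBinom_of_le (by omega), qBinom_of_le hkj, qBinom_of_le (by omega),
    show 2 * k - k = k by omega, show p - 2 * k - (j - k) = p - j - k by omega]
  field_simp [qFac_ne_zero]

lemma qA_summand_eq {n p j k : ℕ} (hkj : k ≤ j) (hjk : j + k ≤ p) :
    qA n k * (q ^ (k * (n + k) + j * (n + j)) * qBinom p (2 * k) * qBinom (p - 2 * k) (j - k)) =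
      qBinom (2 * n) n * (q ^ (j * (n + j)) * qBinom p j) *
        (q ^ (k * (n + k)) * qBinom j k * qBinom (p - j) k / qBinom (n + k) k) := by
  rw [qA_eq_qBinom, pow_add]
  linear_combination (qBinom (2 * n) n * q ^ (k * (n + k)) * q ^ (j * (n + j)) /
    qBinom (n + k) k) * qBinom_multinomial_regroup hkj hjk

theorem qA_recurrence (n p : ℕ) :
    qA n (n + p) =
      ∑ k ∈ Finset.range (p / 2 + 1), qA n k *
        ∑ j ∈ Finset.Icc k (p - k),
          RatFunc.X ^ (k * (n + k) + j * (n + j)) *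
            qBinom p (2 * k) * qBinom (p - 2 * k) (j - k) := by
  set T : ℕ → ℕ → RatFunc ℚ := fun j k =>
    qBinom (2 * n) n * (q ^ (j * (n + j)) * qBinom p j) *
      (q ^ (k * (n + k)) * qBinom j k * qBinom (p - j) k / qBinom (n + k) k)
  calc qA n (n + p)
      = qBinom (2 * n) n * ∑ j ∈ range (p + 1),
          q ^ (j * (n + j)) * qBinom (n + p) j * qBinom p j / qBinom (n + j) j := by
        rw [qA_eq_qBinom, sum_qBinom_mul_qBinom_div_qBinom, mul_div_assoc,
          show n + (n + p) + p = 2 * (n + p) by ring]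
    _ = ∑ j ∈ range (p + 1), ∑ k ∈ range (p - j + 1), T j k := by
        rw [mul_sum]
        refine sum_congr rfl fun j hj => ?_
        rw [← mul_sum, sum_qBinom_mul_qBinom_div_qBinom,
          show n + j + (p - j) = n + p by have := mem_range.mp hj; omega]
        ring
    _ = ∑ j ∈ range (p + 1), ∑ k ∈ range (min j (p - j) + 1), T j k := by
        refine sum_congr rfl fun j _ => (sum_subset ?_ fun k hk hk' => ?_).symm
        · exact range_subset_range.mpr (by omega)
        · have hjk : j < k := by simp only [mem_range] at hk hk'; omega
          simp only [T, qBinom_of_lt hjk, mul_zero, zero_mul, zero_div]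
    _ = ∑ k ∈ range (p / 2 + 1), ∑ j ∈ Icc k (p - k), T j k := by
        refine (sum_comm' fun k j => ?_).symm
        simp only [mem_range, mem_Icc]
        omega
    _ = _ := by
        refine sum_congr rfl fun k _ => ?_
        rw [mul_sum]
        refine sum_congr rfl fun j hj => ?_
        have hj' := mem_Icc.mp hj
        exact (qA_summand_eq hj'.1 (by omega)).symm
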